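/- If a queue machine M accepts input x (i.e., reaches the empty queue), then the session type encoding of its finite control is not an asynchronous subtype of the encoding of the initial queue: semT(s) ≰ semS(x$). In particular, for the single-consuming encoding [[·]], if [[s]]^∅ ≤ [[x$]] holds then M does not terminate on x. -/

import Mathlib

/-- Binary session types: output selection `⊕{lᵢ:Tᵢ}`, input branching `&{lᵢ:Tᵢ}`,
recursion `μt.T` (de Bruijn), variables, and `end`. Labels are natural numbers. -/
inductive SType : Type
  | out : List (Nat × SType) → SType
  | inp : List (Nat × SType) → SType
  | mu  : SType → SType
  | var : Nat → SType
  | done : SType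

mutual
/-- The dual of a session type: swap `⊕` and `&`. -/
def SType.dual : SType → SType
  | .out bs => .inp (dualBranches bs)
  | .inp bs => .out (dualBranches bs)
  | .mu t => .mu t.dual
  | .var n => .var n
  | .done => .done
def dualBranches : List (Nat × SType) → List (Nat × SType)
  | [] => []
  | (l, t) :: rest => (l, t.dual) :: dualBranches rest
end

mutual
/-- Substitution of `s` for the variable of de Bruijn index `k`. -/
def SType.subst (s : SType) : Nat → SType → SType
  | k, .out bs => .out (substBranches s k bs)
  | k, .inp bs => .inp (substBranches s k bs)
  | k, .mu t => .mu (SType.subst s (k+1) t)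
  | k, .var n => if n = k then s else .var n
  | _, .done => .done
def substBranches (s : SType) : Nat → List (Nat × SType) → List (Nat × SType)
  | _, [] => []
  | k, (l, t) :: rest => (l, SType.subst s k t) :: substBranches s k rest
end

mutual
/-- One-step unfolding of a session type. -/
def SType.unfold1 : SType → SType
  | .out bs => .out (unfold1Branches bs)
  | .inp bs => .inp (unfold1Branches bs)
  | .mu t => SType.subst (.mu t) 0 t
  | .var n => .var n
  | .done => .done
def unfold1Branches : List (Nat × SType) → List (Nat × SType)
  | [] => []
  | (l, t) :: rest => (l, t.unfold1) :: unfold1Branches rest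
end

/-- `n`-fold unfolding. -/
def SType.unfoldN : Nat → SType → SType
  | 0, t => t
  | n+1, t => (SType.unfoldN n t).unfold1

/-- A session type is single-out if every output selection has exactly one choice. -/
inductive SingleOut : SType → Prop
  | out {l t} : SingleOut t → SingleOut (.out [(l, t)])
  | inp {bs} : (∀ p ∈ bs, SingleOut p.2) → SingleOut (.inp bs)
  | mu {t} : SingleOut t → SingleOut (.mu t)
  | var {n} : SingleOut (.var n)
  | done : SingleOut .done

/-- A session type is single-in if every input branching has exactly one choice. -/
inductive SingleIn : SType → Prop
  | out {bs} : (∀ p ∈ bs, SingleIn p.2) → SingleIn (.out bs)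
  | inp {l t} : SingleIn t → SingleIn (.inp [(l, t)])
  | mu {t} : SingleIn t → SingleIn (.mu t)
  | var {n} : SingleIn (.var n)
  | done : SingleIn .done
/-- `T` contains at least one input branching. -/
inductive HasInp : SType → Prop
  | inp {bs} : HasInp (.inp bs)
  | out {bs l t} : (l, t) ∈ bs → HasInp t → HasInp (.out bs)
  | mu {t} : HasInp t → HasInp (.mu t)

/-- Input contexts: multi-hole contexts made of input branchings, holes are numbered. -/
inductive ICtx : Type
  | hole : Nat → ICtx
  | inp : List (Nat × ICtx) → ICtx

mutual
/-- Fill each hole `n` of the input context with `f n`. -/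
def ICtx.fill : ICtx → (Nat → SType) → SType
  | .hole n, f => f n
  | .inp bs, f => .inp (fillBranches bs f)
def fillBranches : List (Nat × ICtx) → (Nat → SType) → List (Nat × SType)
  | [], _ => []
  | (l, A) :: rest, f => (l, A.fill f) :: fillBranches rest f
end

mutual
/-- The list of hole indices occurring in an input context. -/
def ICtx.holes : ICtx → List Nat
  | .hole n => [n]
  | .inp bs => holesBranches bs
def holesBranches : List (Nat × ICtx) → List Nat
  | [] => []
  | (_, A) :: rest => A.holes ++ holesBranches rest
end

/-- Well-formed input context: holes are exactly `1..m` for some `m ≥ 1`,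
each occurring exactly once. -/
def ICtx.WF (A : ICtx) : Prop :=
  ∃ m : Nat, 1 ≤ m ∧ A.holes.Perm (List.range' 1 m)

/-- Labels of a branch list. -/
def labelsOf (bs : List (Nat × SType)) : List Nat := bs.map Prod.fst

def SubsetL (I J : List Nat) : Prop := ∀ l ∈ I, l ∈ J
def EqL (I J : List Nat) : Prop := ∀ l, l ∈ I ↔ l ∈ J

/-- `R` is an asynchronous subtyping relation, with flags:
`orphan`: include the no-orphan-message constraint in condition 2;
`outTotal`: require `I = J_k` in condition 2 (no output covariance);
`inTotal`: require `J = I` in condition 3 (no input contravariance). -/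
def IsSubRel (orphan outTotal inTotal : Bool) (R : SType → SType → Prop) : Prop :=
  ∀ T S, R T S →
    -- 1. end
    (T = .done → ∃ n, S.unfoldN n = .done) ∧
    -- 2. output selection
    (∀ bs, T = .out bs →
      ∃ (n : Nat) (A : ICtx) (Sb : Nat → List (Nat × SType)),
        A.WF ∧
        S.unfoldN n = A.fill (fun k => .out (Sb k)) ∧
        (∀ k ∈ A.holes,
          (outTotal = true → EqL (labelsOf bs) (labelsOf (Sb k))) ∧
          (outTotal = false → SubsetL (labelsOf bs) (labelsOf (Sb k)))) ∧
        (∀ l Ti, (l, Ti) ∈ bs → ∃ g : Nat → SType,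
          (∀ k ∈ A.holes, (Sb k).lookup l = some (g k)) ∧ R Ti (A.fill g)) ∧
        (orphan = true → A ≠ .hole 1 → ∀ l Ti, (l, Ti) ∈ bs → HasInp Ti)) ∧
    -- 3. input branching
    (∀ bs, T = .inp bs →
      ∃ (n : Nat) (Sb : List (Nat × SType)),
        S.unfoldN n = .inp Sb ∧
        (inTotal = true → EqL (labelsOf Sb) (labelsOf bs)) ∧
        (inTotal = false → SubsetL (labelsOf Sb) (labelsOf bs)) ∧
        (∀ l Sj, (l, Sj) ∈ Sb → ∃ Tj, bs.lookup l = some Tj ∧ R Tj Sj)) ∧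
    -- 4. recursion
    (∀ T', T = .mu T' → R (SType.subst T 0 T') S)

/-- An (orphan-message-free) asynchronous subtyping relation. -/
def IsAsyncSubRel (R : SType → SType → Prop) : Prop := IsSubRel true false false R

/-- Asynchronous subtyping `T ≤ S`. -/
def Subt (T S : SType) : Prop := ∃ R, IsAsyncSubRel R ∧ R T S

/-- `R` is dual closed: `(T,S) ∈ R` implies `(dual S, dual T) ∈ R`. -/
def DualClosed (R : SType → SType → Prop) : Prop :=
  ∀ T S, R T S → R S.dual T.dual

/-- An asynchronous dual closed subtyping relation: dual closed, and conditions
1, 3, 4 plus condition 2 without the no-orphan-message constraint. -/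
def IsDCSubRel (R : SType → SType → Prop) : Prop :=
  DualClosed R ∧ IsSubRel false false false R

/-- Asynchronous dual closed subtyping `T ≤_DC S`. -/
def SubtDC (T S : SType) : Prop := ∃ R, IsDCSubRel R ∧ R T S

/-- A queue machine over states `Q` and queue alphabet `Γ`, given by its
transition function `δ : Q × Γ → Q × Γ*`. -/
structure QM (Q Γ : Type) where
  delta : Q → Γ → Q × List Γ

/-- One step of a queue machine: `(p, Aα) → (q, αγ)` when `δ(p,A) = (q,γ)`. -/
def QStep {Q Γ : Type} (M : QM Q Γ) (c c' : Q × List Γ) : Prop :=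
  ∃ (A : Γ) (α : List Γ), c.2 = A :: α ∧
    c' = ((M.delta c.1 A).1, α ++ (M.delta c.1 A).2)

/-- Reachability in a queue machine. -/
def QSteps {Q Γ : Type} (M : QM Q Γ) : (Q × List Γ) → (Q × List Γ) → Prop :=
  Relation.ReflTransGen (QStep M)

/-- A queue machine is single consuming if it never performs two consecutive
transitions that both enqueue the empty string. -/
def SingleConsuming {Q Γ : Type} (M : QM Q Γ) : Prop :=
  ∀ q a q', M.delta q a = (q', []) → ¬ ∃ b q'', M.delta q' b = (q'', [])

/-- The single consuming encoding `E(M)`: states are doubled (`inl` unprimed,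
`inr` primed) and the queue alphabet gains the fresh symbol `#` (here `none`,
original symbols being `some a`). -/
def encodeSC {Q Γ : Type} [DecidableEq Γ] (M : QM Q Γ) : QM (Q ⊕ Q) (Option Γ) where
  delta
    | Sum.inl q, some a =>
        if (M.delta q a).2 = [] then (Sum.inr (M.delta q a).1, [])
        else (Sum.inl (M.delta q a).1, (M.delta q a).2.map some)
    | Sum.inl q, none => (Sum.inr q, [])
    | Sum.inr q, some a =>
        if (M.delta q a).2 = [] then (Sum.inl (M.delta q a).1, [none])
        else (Sum.inl (M.delta q a).1, (M.delta q a).2.map some)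
    | Sum.inr q, none => (Sum.inl q, [none])

/-- Erasure: unprime the state and delete every occurrence of `#` from the
queue. -/
def eraseConf {Q Γ : Type} (c : (Q ⊕ Q) × List (Option Γ)) : Q × List Γ :=
  (Sum.elim id id c.1, c.2.filterMap id)

/-- `T' = μt.&{A₁ : ⊕{A₂ : t}_{A₂∈Γ}}_{A₁∈Γ}`. -/
def Tp (Γl : List Nat) : SType :=
  .mu (.inp (Γl.map fun A1 => (A1, .out (Γl.map fun A2 => (A2, .var 0)))))

/-- `T'' = μt.&{A₁ : &{A₂ : ⊕{A₃ : t}_{A₃∈Γ}}_{A₂∈Γ}}_{A₁∈Γ}`. -/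
def Tpp (Γl : List Nat) : SType :=
  .mu (.inp (Γl.map fun A1 => (A1, .inp (Γl.map fun A2 =>
    (A2, .out (Γl.map fun A3 => (A3, .var 0)))))))

/-- `⟨B₁⋯B_m⟩ c`: writing of `B₁⋯B_m` into the queue, saturated on the whole
alphabet (wrong symbols continue as `T'`), followed by `c`. -/
def outCont (Γl : List Nat) : List Nat → SType → SType
  | [], c => c
  | B :: rest, c =>
      .out (Γl.map fun A' => (A', if A' = B then outCont Γl rest c else Tp Γl))

/-- Finite control encoding `[[q]]^visited` for single consuming queue
machines (with fuel, large enough when starting from the empty visited set). -/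
def BsemTAux {Q : Type} [DecidableEq Q] (delta : Q → Nat → Q × List Nat)
    (Γl : List Nat) : Nat → List Q → Q → SType
  | 0, _, _ => .done
  | fuel+1, visited, q =>
    if q ∈ visited then .var (visited.idxOf q)
    else .mu (.inp (Γl.map fun A =>
      (A, outCont Γl (delta q A).2 (BsemTAux delta Γl fuel (q :: visited) (delta q A).1))))

/-- Finite control encoding `[[q]]^∅`. -/
def BsemT {Q : Type} [Fintype Q] [DecidableEq Q] (delta : Q → Nat → Q × List Nat)
    (Γl : List Nat) (q : Q) : SType :=
  BsemTAux delta Γl (Fintype.card Q + 1) [] q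

/-- Encoding of the empty queue:
`μt.⊕{A : &({A : t} ⊎ {A' : T''}_{A'∈Γ∖{A}})}_{A∈Γ}`. -/
def BsemSNil (Γl : List Nat) : SType :=
  .mu (.out (Γl.map fun A => (A, .inp (Γl.map fun A' =>
    (A', if A' = A then .var 0 else Tpp Γl)))))

/-- Queue encoding `[[C₁⋯C_m]]` for single consuming queue machines. -/
def BsemS (Γl : List Nat) : List Nat → SType
  | [] => BsemSNil Γl
  | C :: rest =>
      .inp (Γl.map fun A' => (A', if A' = C then BsemS Γl rest else Tpp Γl))

/-!
Along a run of `M` we keep a pair `(T, S)` of the subtyping relation, with `T` a closed unfolding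
of the control encoding of the current state and `S` an unfolding of the encoding of the current
queue, whose inputs may already anticipate outputs of the supertype. Reading `A` is matched by
conditions 4 and 3, since the queue encoding offers `A` as its first input; each symbol written
is matched by condition 2, which moves the corresponding anticipated output of the supertype
behind the queue. Once the queue is empty, the control encoding still unfolds to an input
branching while every unfolding of `[[ε]]` is a recursion or an output selection, contradicting
condition 3.
-/

theorem substBranches_eq_map (s : SType) (k : Nat) (bs : List (Nat × SType)) :
    substBranches s k bs = bs.map fun p => (p.1, SType.subst s k p.2) := by
  induction bs with
  | nil => rfl
  | cons p rest ih => simp [substBranches, ih]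

theorem unfold1Branches_eq_map (bs : List (Nat × SType)) :
    unfold1Branches bs = bs.map fun p => (p.1, p.2.unfold1) := by
  induction bs with
  | nil => rfl
  | cons p rest ih => simp [unfold1Branches, ih]

theorem fillBranches_eq_map (bs : List (Nat × ICtx)) (f : Nat → SType) :
    fillBranches bs f = bs.map fun p => (p.1, p.2.fill f) := by
  induction bs with
  | nil => rfl
  | cons p rest ih => simp [fillBranches, ih]

theorem List.lookup_map_pair {α β : Type*} [BEq α] [LawfulBEq α] (l : List α) (F : α → β)
    (b : α) :
    (l.map fun a => (a, F a)).lookup b = if b ∈ l then some (F b) else none := by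
  induction l with
  | nil => simp
  | cons a rest ih =>
    by_cases hba : b = a
    · simp [hba]
    · simp [List.lookup_cons, beq_eq_false_iff_ne.mpr hba, hba, ih]

theorem ICtx.holes_subset_of_mem {bs : List (Nat × ICtx)} {l : Nat} {A : ICtx}
    (h : (l, A) ∈ bs) : A.holes ⊆ (ICtx.inp bs).holes := by
  intro j hj
  show j ∈ holesBranches bs
  induction bs with
  | nil => simp at h
  | cons p rest ih =>
    rcases List.mem_cons.mp h with rfl | h
    · exact List.mem_append_left _ hj
    · exact List.mem_append_right _ (ih h)

namespace SType

theorem nestedInduction {motive : SType → Prop}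
    (out : ∀ bs, (∀ p ∈ bs, motive p.2) → motive (.out bs))
    (inp : ∀ bs, (∀ p ∈ bs, motive p.2) → motive (.inp bs))
    (mu : ∀ t, motive t → motive (.mu t))
    (var : ∀ n, motive (.var n))
    (done : motive .done) : ∀ t, motive t
  | .out bs => out bs fun p _ => nestedInduction out inp mu var done p.2
  | .inp bs => inp bs fun p _ => nestedInduction out inp mu var done p.2
  | .mu t => mu t (nestedInduction out inp mu var done t)
  | .var n => var n
  | .done => done
  termination_by t => sizeOf t
  decreasing_by
  all_goals first
    | (have := List.sizeOf_lt_of_mem ‹p ∈ bs›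
       obtain ⟨_, _⟩ := p
       simp at this ⊢
       omega)
    | simp

theorem subst_out (s : SType) (k : Nat) (bs : List (Nat × SType)) :
    subst s k (.out bs) = .out (bs.map fun p => (p.1, subst s k p.2)) := by
  rw [subst, substBranches_eq_map]

theorem subst_inp (s : SType) (k : Nat) (bs : List (Nat × SType)) :
    subst s k (.inp bs) = .inp (bs.map fun p => (p.1, subst s k p.2)) := by
  rw [subst, substBranches_eq_map]

theorem unfold1_out (bs : List (Nat × SType)) :
    unfold1 (.out bs) = .out (bs.map fun p => (p.1, p.2.unfold1)) := by
  rw [unfold1, unfold1Branches_eq_map]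

theorem unfold1_inp (bs : List (Nat × SType)) :
    unfold1 (.inp bs) = .inp (bs.map fun p => (p.1, p.2.unfold1)) := by
  rw [unfold1, unfold1Branches_eq_map]

theorem unfoldN_add (m n : Nat) (t : SType) : unfoldN (m + n) t = unfoldN n (unfoldN m t) := by
  induction n with
  | zero => rfl
  | succ n ih => exact congrArg unfold1 ih

inductive Closed : Nat → SType → Prop
  | out {n bs} : (∀ p ∈ bs, Closed n p.2) → Closed n (.out bs)
  | inp {n bs} : (∀ p ∈ bs, Closed n p.2) → Closed n (.inp bs)
  | mu {n t} : Closed (n + 1) t → Closed n (.mu t)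
  | var {n m} : m < n → Closed n (.var m)
  | done {n} : Closed n .done

theorem Closed.mono {n m : Nat} {t : SType} (h : Closed n t) (hnm : n ≤ m) : Closed m t := by
  induction h generalizing m with
  | out _ ih => exact .out fun p hp => ih p hp hnm
  | inp _ ih => exact .inp fun p hp => ih p hp hnm
  | mu _ ih => exact .mu (ih (by omega))
  | var h => exact .var (by omega)
  | done => exact .done

theorem Closed.subst_eq_self {n : Nat} {t : SType} (h : Closed n t) {s : SType} {k : Nat}
    (hk : n ≤ k) : subst s k t = t := by
  induction h generalizing k with
  | @out n bs _ ih =>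
    rw [subst_out]
    exact congrArg SType.out ((List.map_congr_left fun p hp => by rw [ih p hp hk]; rfl).trans
      (List.map_id bs))
  | @inp n bs _ ih =>
    rw [subst_inp]
    exact congrArg SType.inp ((List.map_congr_left fun p hp => by rw [ih p hp hk]; rfl).trans
      (List.map_id bs))
  | mu _ ih => rw [subst, ih (by omega)]
  | @var n m h => rw [subst, if_neg (by omega)]
  | done => rfl

theorem Closed.subst {s : SType} (hs : Closed 0 s) {n : Nat} {t : SType} (h : Closed (n + 1) t) :
    Closed n (subst s n t) := by
  generalize hM : n + 1 = M at h
  induction h generalizing n with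
  | out _ ih =>
    rw [subst_out]
    exact .out fun p hp => by
      obtain ⟨q, hq, rfl⟩ := List.mem_map.mp hp
      exact ih q hq hM
  | inp _ ih =>
    rw [subst_inp]
    exact .inp fun p hp => by
      obtain ⟨q, hq, rfl⟩ := List.mem_map.mp hp
      exact ih q hq hM
  | mu _ ih => exact .mu (ih (by omega))
  | @var m j h =>
    rw [SType.subst]
    split_ifs with hjn
    · exact hs.mono (Nat.zero_le n)
    · exact .var (by omega)
  | done => exact .done

theorem subst_comm {s s' : SType} (hs : Closed 0 s) (hs' : Closed 0 s') (t : SType) {j k : Nat}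
    (hjk : j ≠ k) : subst s j (subst s' k t) = subst s' k (subst s j t) := by
  induction t using nestedInduction generalizing j k with
  | out bs ih =>
    simp only [subst_out, List.map_map]
    exact congrArg SType.out (List.map_congr_left fun p hp => by simp [ih p hp hjk])
  | inp bs ih =>
    simp only [subst_inp, List.map_map]
    exact congrArg SType.inp (List.map_congr_left fun p hp => by simp [ih p hp hjk])
  | mu t ih => simp only [SType.subst, ih (by omega : j + 1 ≠ k + 1)]
  | var n =>
    by_cases hnk : n = k <;> by_cases hnj : n = j
    · omega
    · subst hnk
      simp [SType.subst, hnj, hs'.subst_eq_self (Nat.zero_le j)]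
    · subst hnj
      simp [SType.subst, hnk, hs.subst_eq_self (Nat.zero_le k)]
    · simp only [SType.subst, if_neg hnk, if_neg hnj]
  | done => rfl

/-- For closed `sᵢ`, `substList k [s₀, …, sₘ] t` substitutes `sᵢ` for the variable `k + i`.
-/
def substList : Nat → List SType → SType → SType
  | _, [], t => t
  | k, s :: E, t => substList (k + 1) E (subst s k t)

variable {E : List SType}

theorem substList_of_closed {k : Nat} {t : SType} (ht : Closed 0 t) : substList k E t = t := by
  induction E generalizing k t with
  | nil => rfl
  | cons s E ih => rw [substList, ht.subst_eq_self (Nat.zero_le k), ih ht]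

theorem substList_mu {k : Nat} {t : SType} :
    substList k E (.mu t) = .mu (substList (k + 1) E t) := by
  induction E generalizing k t with
  | nil => rfl
  | cons s E ih => rw [substList, SType.subst, ih]; rfl

theorem substList_inp {k : Nat} {bs : List (Nat × SType)} :
    substList k E (.inp bs) = .inp (bs.map fun p => (p.1, substList k E p.2)) := by
  induction E generalizing k bs with
  | nil => simp [substList]
  | cons s E ih => rw [substList, subst_inp, ih, List.map_map]; rfl

theorem substList_var (hE : ∀ s ∈ E, Closed 0 s) {k j : Nat} (hkj : k ≤ j)
    (h : j - k < E.length) : substList k E (.var j) = E[j - k] := by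
  induction E generalizing k with
  | nil => simp at h
  | cons s E ih =>
    rw [substList, SType.subst]
    split_ifs with hjk
    · subst hjk
      simp [substList_of_closed (hE s List.mem_cons_self)]
    · have h' : j - (k + 1) < E.length := by simp at h; omega
      rw [ih (fun x hx => hE x (List.mem_cons_of_mem s hx)) (by omega) h']
      simp only [show j - k = j - (k + 1) + 1 by omega, List.getElem_cons_succ]

theorem substList_subst_comm {s : SType} (hs : Closed 0 s) (hE : ∀ x ∈ E, Closed 0 x)
    {k j : Nat} {t : SType} (hjk : j < k) :
    substList k E (subst s j t) = subst s j (substList k E t) := by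
  induction E generalizing k t with
  | nil => rfl
  | cons x E ih =>
    rw [substList, substList, subst_comm (hE x List.mem_cons_self) hs t (by omega),
      ih (fun y hy => hE y (List.mem_cons_of_mem x hy)) (by omega)]

theorem Closed.substList (hE : ∀ s ∈ E, Closed 0 s) {k : Nat} {t : SType}
    (h : Closed (k + E.length) t) : Closed k (substList k E t) := by
  induction E generalizing k t with
  | nil => exact h
  | cons s E ih =>
    have hE' : ∀ y ∈ E, Closed 0 y := fun y hy => hE y (List.mem_cons_of_mem s hy)
    rw [SType.substList, substList_subst_comm (hE s List.mem_cons_self) hE' (by omega)]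
    refine .subst (hE s List.mem_cons_self) (ih hE' ?_)
    simpa [Nat.add_right_comm, Nat.add_assoc] using h

end SType

open SType

theorem closed_Tp (Γl : List Nat) : Closed 0 (Tp Γl) := by
  refine .mu (.inp fun p hp => ?_)
  obtain ⟨a, _, rfl⟩ := List.mem_map.mp hp
  refine .out fun p' hp' => ?_
  obtain ⟨b, _, rfl⟩ := List.mem_map.mp hp'
  exact .var Nat.zero_lt_one

theorem closed_Tpp (Γl : List Nat) : Closed 0 (Tpp Γl) := by
  refine .mu (.inp fun p hp => ?_)
  obtain ⟨a, _, rfl⟩ := List.mem_map.mp hp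
  refine .inp fun p' hp' => ?_
  obtain ⟨b, _, rfl⟩ := List.mem_map.mp hp'
  refine .out fun p'' hp'' => ?_
  obtain ⟨c, _, rfl⟩ := List.mem_map.mp hp''
  exact .var Nat.zero_lt_one

theorem Closed.outCont {Γl : List Nat} {n : Nat} {c : SType} (hc : Closed n c) (l : List Nat) :
    Closed n (outCont Γl l c) := by
  induction l with
  | nil => exact hc
  | cons B rest ih =>
    refine .out fun p hp => ?_
    obtain ⟨a, _, rfl⟩ := List.mem_map.mp hp
    split_ifs
    · exact ih
    · exact (closed_Tp Γl).mono (Nat.zero_le n)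

theorem subst_outCont (Γl : List Nat) (s : SType) (k : Nat) (l : List Nat) (c : SType) :
    subst s k (outCont Γl l c) = outCont Γl l (subst s k c) := by
  induction l with
  | nil => rfl
  | cons B rest ih =>
    simp only [outCont, subst_out, List.map_map]
    refine congrArg SType.out (List.map_congr_left fun a _ => ?_)
    split_ifs
    · simp [*]
    · simp [*, (closed_Tp Γl).subst_eq_self (Nat.zero_le k)]

theorem substList_outCont {Γl : List Nat} {E : List SType} {k : Nat} {l : List Nat} {c : SType} :
    substList k E (outCont Γl l c) = outCont Γl l (substList k E c) := by
  induction E generalizing k c with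
  | nil => rfl
  | cons s E ih => rw [substList, substList, subst_outCont, ih]

theorem closed_BsemTAux {Q : Type} [DecidableEq Q] (δ : Q → Nat → Q × List Nat)
    (Γl : List Nat) (fuel : Nat) (visited : List Q) (q : Q) :
    Closed visited.length (BsemTAux δ Γl fuel visited q) := by
  induction fuel generalizing visited q with
  | zero => exact .done
  | succ fuel ih =>
    rw [BsemTAux]
    split_ifs with hq
    · exact .var (List.idxOf_lt_length_iff.mpr hq)
    · refine .mu (.inp fun p hp => ?_)
      obtain ⟨a, _, rfl⟩ := List.mem_map.mp hp
      exact Closed.outCont (ih (q :: visited) (δ q a).1) _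

theorem substList_BsemTAux_succ {Q : Type} [DecidableEq Q] {δ : Q → Nat → Q × List Nat}
    {Γl : List Nat} {E : List SType} (hE : ∀ s ∈ E, Closed 0 s) {fuel : Nat} {v : List Q}
    {q : Q} (hq : q ∉ v) {T : SType} (hT : T = substList 0 E (BsemTAux δ Γl (fuel + 1) v q))
    (hTclosed : Closed 0 T) :
    ∃ body, T = .mu body ∧ subst T 0 body = .inp (Γl.map fun A => (A, outCont Γl (δ q A).2
      (substList 0 (T :: E) (BsemTAux δ Γl fuel (q :: v) (δ q A).1)))) := by
  refine ⟨substList 1 E (.inp (Γl.map fun A =>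
    (A, outCont Γl (δ q A).2 (BsemTAux δ Γl fuel (q :: v) (δ q A).1)))), ?_, ?_⟩
  · rw [hT, BsemTAux, if_neg hq, substList_mu]
  · rw [substList_inp, List.map_map, subst_inp, List.map_map]
    refine congrArg SType.inp (List.map_congr_left fun A _ => ?_)
    simp only [Function.comp, substList_outCont, subst_outCont]
    rw [← substList_subst_comm hTclosed hE Nat.zero_lt_one]
    rfl

/-- The closed types met while unfolding `[[q]]^∅`: `[[q]]^visited` with the variable of each
visited state replaced by a representation of that state. Since `visited` has no duplicates, the
fuel bound keeps `BsemTAux` from running out of fuel. -/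
inductive ControlRep {Q : Type} [Fintype Q] [DecidableEq Q] (δ : Q → Nat → Q × List Nat)
    (Γl : List Nat) : SType → Q → Prop
  | mk (fuel : Nat) (visited : List Q) (E : List SType) (q : Q) :
      visited.Nodup → Fintype.card Q + 1 ≤ fuel + visited.length →
      E.length = visited.length → (∀ s ∈ E, Closed 0 s) →
      (∀ (j : Nat) (h₁ : j < E.length) (h₂ : j < visited.length),
        ControlRep δ Γl E[j] visited[j]) →
      ControlRep δ Γl (substList 0 E (BsemTAux δ Γl fuel visited q)) q

section ControlRep

variable {Q : Type} [Fintype Q] [DecidableEq Q] {δ : Q → Nat → Q × List Nat} {Γl : List Nat}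

theorem controlRep_BsemT (q : Q) : ControlRep δ Γl (BsemT δ Γl q) q :=
  .mk _ [] [] q List.nodup_nil (by simp) rfl (by simp) fun _ h => absurd h (Nat.not_lt_zero _)

theorem ControlRep.unfold {T : SType} {q : Q} (h : ControlRep δ Γl T q) :
    ∃ (body : SType) (g : Nat → SType), T = .mu body ∧
      subst T 0 body = .inp (Γl.map fun A => (A, outCont Γl (δ q A).2 (g A))) ∧
      ∀ A, ControlRep δ Γl (g A) (δ q A).1 := by
  induction h with
  | mk fuel v E q hnd hfuel hlen hE hEv ih =>
    obtain ⟨fuel, rfl⟩ : ∃ f, fuel = f + 1 :=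
      ⟨fuel - 1, by have := hnd.length_le_card; omega⟩
    by_cases hq : q ∈ v
    · have hidx : v.idxOf q < v.length := List.idxOf_lt_length_iff.mpr hq
      have hT : substList 0 E (BsemTAux δ Γl (fuel + 1) v q) = E[v.idxOf q] := by
        rw [BsemTAux, if_pos hq, substList_var hE (Nat.zero_le _) (by omega)]
        rfl
      rw [hT]
      simpa only [List.getElem_idxOf hidx] using ih (v.idxOf q) (by omega) hidx
    · set T := substList 0 E (BsemTAux δ Γl (fuel + 1) v q) with hT
      have hTclosed : Closed 0 T :=
        Closed.substList hE (by simpa [hlen] using closed_BsemTAux δ Γl (fuel + 1) v q)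
      have hTrep : ControlRep δ Γl T q := .mk (fuel + 1) v E q hnd hfuel hlen hE hEv
      obtain ⟨body, hbody, hunfold⟩ := substList_BsemTAux_succ hE hq hT hTclosed
      refine ⟨body, _, hbody, hunfold, fun A => .mk fuel (q :: v) (T :: E) (δ q A).1
        (List.nodup_cons.mpr ⟨hq, hnd⟩) (by simp; omega) (by simp [hlen]) ?_ ?_⟩
      · rintro s (_ | ⟨_, hs⟩)
        exacts [hTclosed, hE s hs]
      · rintro (_ | j) h₁ h₂
        · exact hTrep
        · exact hEv j (by simpa using h₁) (by simpa using h₂)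

end ControlRep

theorem unfold1_BsemSNil (Γl : List Nat) :
    (BsemSNil Γl).unfold1 = .out (Γl.map fun A => (A, BsemS Γl [A])) := by
  rw [BsemSNil, unfold1, subst_out, List.map_map]
  refine congrArg SType.out (List.map_congr_left fun A _ => ?_)
  simp only [Function.comp, subst_inp, List.map_map, BsemS]
  refine congrArg _ (congrArg SType.inp (List.map_congr_left fun B _ => ?_))
  by_cases hBA : B = A
  · simp [hBA, SType.subst, BsemSNil]
  · simp [hBA, (closed_Tpp Γl).subst_eq_self le_rfl]

theorem unfoldN_succ_BsemSNil (Γl : List Nat) (k : Nat) :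
    (BsemSNil Γl).unfoldN (k + 1) = .out (Γl.map fun A => (A, (BsemS Γl [A]).unfoldN k)) := by
  induction k with
  | zero => exact unfold1_BsemSNil Γl
  | succ k ih =>
    rw [unfoldN, ih, unfold1_out, List.map_map]
    rfl

theorem unfoldN_BsemSNil_ne_inp (Γl : List Nat) (n : Nat) (bs : List (Nat × SType)) :
    (BsemSNil Γl).unfoldN n ≠ .inp bs := by
  cases n with
  | zero => exact SType.noConfusion
  | succ k => rw [unfoldN_succ_BsemSNil]; exact SType.noConfusion

/-- `S` represents the queue `α`: up to unfolding it reads `α` and continues as `[[ε]]`. Its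
inputs may offer other labels leading anywhere, since the supertype may anticipate outputs. -/
inductive QueueRep (Γl : List Nat) : SType → List Nat → Prop
  | nil (n : Nat) : QueueRep Γl ((BsemSNil Γl).unfoldN n) []
  | cons {C : Nat} {α : List Nat} {S : SType} (bs : List (Nat × SType)) :
      QueueRep Γl S α → (C, S) ∈ bs → QueueRep Γl (.inp bs) (C :: α)

section QueueRep

variable {Γl : List Nat}

theorem QueueRep.unfold1 {S : SType} {α : List Nat} (h : QueueRep Γl S α) :
    QueueRep Γl S.unfold1 α := by
  induction h with
  | nil n => exact .nil (n + 1)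
  | cons bs _ hmem ih =>
    rw [unfold1_inp]
    exact .cons _ ih (List.mem_map_of_mem (f := fun p => (p.1, p.2.unfold1)) hmem)

theorem QueueRep.unfoldN {S : SType} {α : List Nat} (h : QueueRep Γl S α) (n : Nat) :
    QueueRep Γl (S.unfoldN n) α := by
  induction n with
  | zero => exact h
  | succ n ih => exact ih.unfold1

theorem queueRep_BsemS {α : List Nat} (hα : ∀ a ∈ α, a ∈ Γl) :
    QueueRep Γl (BsemS Γl α) α := by
  induction α with
  | nil => exact .nil 0
  | cons C rest ih =>
    refine .cons _ (ih fun a ha => hα a (List.mem_cons_of_mem C ha)) ?_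
    exact List.mem_map.mpr ⟨C, hα C List.mem_cons_self, by simp⟩

theorem QueueRep.exists_mem_of_eq_inp {S : SType} {C : Nat} {α : List Nat}
    (h : QueueRep Γl S (C :: α)) {bs : List (Nat × SType)} (hS : S = .inp bs) :
    ∃ S', (C, S') ∈ bs ∧ QueueRep Γl S' α := by
  cases h with
  | cons bs' h hmem => cases hS; exact ⟨_, hmem, h⟩

theorem QueueRep.not_unfoldN_eq_inp_of_nil {S : SType} (h : QueueRep Γl S []) (n : Nat)
    (bs : List (Nat × SType)) : S.unfoldN n ≠ .inp bs := by
  cases h with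
  | nil m => rw [← unfoldN_add]; exact unfoldN_BsemSNil_ne_inp Γl (m + n) bs

/-- Condition 2 for an output `B`: the outputs `B` that `S` offers under the input context `A`
are consumed, and what remains represents `β ++ [B]`. -/
theorem QueueRep.enqueue {S : SType} {β : List Nat} (h : QueueRep Γl S β) {A : ICtx}
    {Sb : Nat → List (Nat × SType)} {g : Nat → SType} {B : Nat}
    (hS : S = A.fill fun k => .out (Sb k)) (hg : ∀ k ∈ A.holes, (Sb k).lookup B = some (g k)) :
    QueueRep Γl (A.fill g) (β ++ [B]) := by
  induction h generalizing A with
  | nil m =>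
    cases m with
    | zero => cases A <;> exact SType.noConfusion hS
    | succ k =>
      rw [unfoldN_succ_BsemSNil] at hS
      cases A with
      | inp cbs => exact SType.noConfusion hS
      | hole j =>
        have hj := hg j (List.mem_singleton_self j)
        rw [show Sb j = _ from (SType.out.inj hS).symm, List.lookup_map_pair] at hj
        split_ifs at hj with hB
        rw [ICtx.fill, ← Option.some.inj hj]
        exact (queueRep_BsemS (by simpa using hB)).unfoldN k
  | cons bs _ hmem ih =>
    cases A with
    | hole j => exact SType.noConfusion hS
    | inp cbs =>
      rw [ICtx.fill, fillBranches_eq_map] at hS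
      obtain ⟨⟨C, A'⟩, hA', hCA'⟩ := List.mem_map.mp (SType.inp.inj hS ▸ hmem)
      obtain ⟨rfl, hfill⟩ := Prod.mk.inj hCA'
      rw [ICtx.fill, fillBranches_eq_map]
      exact .cons _ (ih hfill.symm fun k hk => hg k (ICtx.holes_subset_of_mem hA' hk))
        (List.mem_map_of_mem (f := fun p => (p.1, p.2.fill g)) hA')

end QueueRep

def RelatedConf {Q : Type} [Fintype Q] [DecidableEq Q] (M : QM Q Nat) (Γl : List Nat)
    (R : SType → SType → Prop) (c : Q × List Nat) : Prop :=
  ∃ T S, ControlRep M.delta Γl T c.1 ∧ QueueRep Γl S c.2 ∧ R T S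

section Simulation

variable {Q : Type} [Fintype Q] [DecidableEq Q] {M : QM Q Nat} {Γl : List Nat}
  {R : SType → SType → Prop}

theorem IsAsyncSubRel.exists_queueRep_of_outCont (hR : IsAsyncSubRel R) {γ : List Nat}
    (hγ : ∀ b ∈ γ, b ∈ Γl) {T S : SType} {β : List Nat} (hTS : R (outCont Γl γ T) S)
    (hS : QueueRep Γl S β) :
    ∃ S', R T S' ∧ QueueRep Γl S' (β ++ γ) := by
  induction γ generalizing S β with
  | nil => exact ⟨S, hTS, by simpa using hS⟩
  | cons B rest ih =>
    have hB : B ∈ Γl := hγ B List.mem_cons_self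
    obtain ⟨n, A, Sb, -, hfill, -, hbranch, -⟩ := (hR _ _ hTS).2.1 _ rfl
    obtain ⟨g, hg, hTg⟩ :=
      hbranch B (outCont Γl rest T) (List.mem_map.mpr ⟨B, hB, by simp⟩)
    obtain ⟨S', hTS', hS'⟩ :=
      ih (fun b hb => hγ b (List.mem_cons_of_mem B hb)) hTg ((hS.unfoldN n).enqueue hfill hg)
    exact ⟨S', hTS', by simpa using hS'⟩

theorem IsAsyncSubRel.exists_unfoldN_eq_inp (hR : IsAsyncSubRel R) {T S : SType} {q : Q}
    (hT : ControlRep M.delta Γl T q) (hTS : R T S) :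
    ∃ (g : Nat → SType) (n : Nat) (Sb : List (Nat × SType)), S.unfoldN n = .inp Sb ∧
      (∀ A S', (A, S') ∈ Sb → A ∈ Γl ∧ R (outCont Γl (M.delta q A).2 (g A)) S') ∧
      ∀ A, ControlRep M.delta Γl (g A) (M.delta q A).1 := by
  obtain ⟨body, g, rfl, hunfold, hg⟩ := hT.unfold
  have hTS₁ := (hR _ _ hTS).2.2.2 body rfl
  rw [hunfold] at hTS₁
  obtain ⟨n, Sb, hSn, -, -, hbranch⟩ := (hR _ _ hTS₁).2.2.1 _ rfl
  refine ⟨g, n, Sb, hSn, fun A S' hmem => ?_, hg⟩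
  obtain ⟨Tj, hTj, hTjS⟩ := hbranch A S' hmem
  rw [List.lookup_map_pair] at hTj
  split_ifs at hTj with hA
  exact ⟨hA, Option.some.inj hTj ▸ hTjS⟩

theorem IsAsyncSubRel.relatedConf_of_step (hR : IsAsyncSubRel R)
    (hdelta : ∀ q a, a ∈ Γl → ∀ b ∈ (M.delta q a).2, b ∈ Γl) {c c' : Q × List Nat}
    (hstep : QStep M c c') (hc : RelatedConf M Γl R c) : RelatedConf M Γl R c' := by
  obtain ⟨A, α, hc₂, rfl⟩ := hstep
  obtain ⟨T, S, hT, hS, hTS⟩ := hc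
  obtain ⟨g, n, Sb, hSn, hbranch, hg⟩ := hR.exists_unfoldN_eq_inp hT hTS
  obtain ⟨S', hmem, hS'⟩ := (hc₂ ▸ hS.unfoldN n).exists_mem_of_eq_inp hSn
  obtain ⟨hA, hTS'⟩ := hbranch A S' hmem
  obtain ⟨S'', hTS'', hS''⟩ := hR.exists_queueRep_of_outCont (hdelta c.1 A hA) hTS' hS'
  exact ⟨g A, S'', hg A, hS'', hTS''⟩

theorem IsAsyncSubRel.relatedConf_of_steps (hR : IsAsyncSubRel R)
    (hdelta : ∀ q a, a ∈ Γl → ∀ b ∈ (M.delta q a).2, b ∈ Γl) {c c' : Q × List Nat}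
    (hsteps : QSteps M c c') (hc : RelatedConf M Γl R c) : RelatedConf M Γl R c' := by
  induction hsteps with
  | refl => exact hc
  | tail _ hstep ih => exact hR.relatedConf_of_step hdelta hstep ih

theorem IsAsyncSubRel.not_relatedConf_nil (hR : IsAsyncSubRel R) (q : Q) :
    ¬ RelatedConf M Γl R (q, []) := by
  rintro ⟨T, S, hT, hS, hTS⟩
  obtain ⟨-, n, Sb, hSn, -⟩ := hR.exists_unfoldN_eq_inp hT hTS
  exact hS.not_unfoldN_eq_inp_of_nil n Sb hSn

end Simulation

/-- if a single consuming queue machine `M` accepts input `x`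
(reaches the empty queue from `(s, x$)`), then `[[s]]^∅ ≰ [[x$]]`; in
particular, if `[[s]]^∅ ≤ [[x$]]` then `M` does not terminate on `x`. -/
theorem accept_implies_not_subtype {Q : Type} [Fintype Q] [DecidableEq Q]
    (M : QM Q Nat) (Γl : List Nat) (hnd : Γl.Nodup)
    (hdelta : ∀ q a, a ∈ Γl → ∀ b ∈ (M.delta q a).2, b ∈ Γl)
    (hsc : SingleConsuming M)
    (s : Q) (x : List Nat) (dollar : Nat)
    (hx : ∀ c ∈ x, c ∈ Γl) (hd : dollar ∈ Γl) :
    ((∃ q, QSteps M (s, x ++ [dollar]) (q, [])) →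
        ¬ Subt (BsemT M.delta Γl s) (BsemS Γl (x ++ [dollar]))) ∧
    (Subt (BsemT M.delta Γl s) (BsemS Γl (x ++ [dollar])) →
        ¬ ∃ q, QSteps M (s, x ++ [dollar]) (q, [])) := by
  have hinput : ∀ a ∈ x ++ [dollar], a ∈ Γl := by
    simpa [or_imp, forall_and] using And.intro hx hd
  have haccept : (∃ q, QSteps M (s, x ++ [dollar]) (q, [])) →
      ¬ Subt (BsemT M.delta Γl s) (BsemS Γl (x ++ [dollar])) := by
    rintro ⟨q, hrun⟩ ⟨R, hR, hsub⟩
    exact hR.not_relatedConf_nil q (hR.relatedConf_of_steps hdelta hrun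
      ⟨_, _, controlRep_BsemT s, queueRep_BsemS hinput, hsub⟩)
  exact ⟨haccept, fun hsub hrun => haccept hrun hsub⟩
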